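/- Let u(x) = χ_{[0,∞)}(x)·φ(x)/√(−ln(x/2)) as above and J(ε) := ∫_{ε−1}^{ε+1} (u(ε) − u(y))/|y − ε| dy. Then J(ε) → 2√(ln 2) as ε → 0⁺. -/

import Mathlib

open MeasureTheory Set Filter intervalIntegral
set_option maxHeartbeats 1000000

noncomputable def fL (y : ℝ) : ℝ := (Real.sqrt (Real.log 2 - Real.log y))⁻¹

lemma fL_nonneg (y : ℝ) : 0 ≤ fL y := by
  unfold fL; positivity

lemma measurable_fL : Measurable fL :=
  (Real.continuous_sqrt.measurable.comp (measurable_const.sub Real.measurable_log)).inv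

lemma fL_le_of {c y : ℝ} (hc : 0 < c) (h : c ≤ Real.log 2 - Real.log y) :
    fL y ≤ (Real.sqrt c)⁻¹ := by
  unfold fL
  exact inv_anti₀ (Real.sqrt_pos.2 hc) (Real.sqrt_le_sqrt h)

lemma fL_mono {a b : ℝ} (ha : 0 < a) (hab : a ≤ b) (hb : Real.log b < Real.log 2) :
    fL a ≤ fL b := by
  have h1 : Real.log a ≤ Real.log b := Real.log_le_log ha hab
  have := fL_le_of (c := Real.log 2 - Real.log b) (by linarith) (by linarith)
  simpa [fL] using this

lemma fL_hasDerivAt {y : ℝ} (hy : 0 < y) (hy2 : Real.log y < Real.log 2) :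
    HasDerivAt fL
      ((2 * y * ((Real.log 2 - Real.log y) * Real.sqrt (Real.log 2 - Real.log y)))⁻¹) y := by
  have ht : 0 < Real.log 2 - Real.log y := by linarith
  have hst : 0 < Real.sqrt (Real.log 2 - Real.log y) := Real.sqrt_pos.2 ht
  have h1 : HasDerivAt (fun x : ℝ => Real.log 2 - Real.log x) (-y⁻¹) y := by
    simpa using ((Real.hasDerivAt_log hy.ne').const_sub (Real.log 2))
  have h2 : HasDerivAt (fun x : ℝ => Real.sqrt (Real.log 2 - Real.log x))
      (1 / (2 * Real.sqrt (Real.log 2 - Real.log y)) * (-y⁻¹)) y :=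
    (Real.hasDerivAt_sqrt ht.ne').comp y h1
  have h3 : HasDerivAt fL _ y := h2.inv hst.ne'
  convert h3 using 1
  have hsq : Real.sqrt (Real.log 2 - Real.log y) ^ 2 = Real.log 2 - Real.log y :=
    Real.sq_sqrt ht.le
  rw [div_mul_eq_mul_div, mul_comm]
  field_simp
  nlinarith [hsq, hst, hy, Real.sqrt_nonneg (Real.log 2 - Real.log y)]

lemma fL_lip {a b x y : ℝ} (ha : 0 < a) (hb : Real.log b < Real.log 2)
    (hx : x ∈ Icc a b) (hy : y ∈ Icc a b) :
    |fL y - fL x| ≤ (2 * a * ((Real.log 2 - Real.log b) * Real.sqrt (Real.log 2 - Real.log b)))⁻¹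
      * |y - x| := by
  have htb : 0 < Real.log 2 - Real.log b := by linarith
  have hstb : 0 < Real.sqrt (Real.log 2 - Real.log b) := Real.sqrt_pos.2 htb
  have hK : 0 < 2 * a * ((Real.log 2 - Real.log b) * Real.sqrt (Real.log 2 - Real.log b)) := by
    positivity
  have key : ∀ z ∈ Icc a b, HasDerivWithinAt fL
      ((2 * z * ((Real.log 2 - Real.log z) * Real.sqrt (Real.log 2 - Real.log z)))⁻¹)
      (Icc a b) z := by
    intro z hz
    have hz0 : 0 < z := lt_of_lt_of_le ha hz.1
    have hz2 : Real.log z < Real.log 2 := lt_of_le_of_lt (Real.log_le_log hz0 hz.2) hb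
    exact (fL_hasDerivAt hz0 hz2).hasDerivWithinAt
  have bound : ∀ z ∈ Icc a b,
      ‖(2 * z * ((Real.log 2 - Real.log z) * Real.sqrt (Real.log 2 - Real.log z)))⁻¹‖ ≤
      (2 * a * ((Real.log 2 - Real.log b) * Real.sqrt (Real.log 2 - Real.log b)))⁻¹ := by
    intro z hz
    have hz0 : 0 < z := lt_of_lt_of_le ha hz.1
    have hz2 : Real.log z < Real.log 2 := lt_of_le_of_lt (Real.log_le_log hz0 hz.2) hb
    have htz : Real.log 2 - Real.log b ≤ Real.log 2 - Real.log z := by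
      have := Real.log_le_log hz0 hz.2; linarith
    have hstz : Real.sqrt (Real.log 2 - Real.log b) ≤ Real.sqrt (Real.log 2 - Real.log z) :=
      Real.sqrt_le_sqrt htz
    have hpos : 0 < 2 * z * ((Real.log 2 - Real.log z) * Real.sqrt (Real.log 2 - Real.log z)) := by
      have : 0 < Real.log 2 - Real.log z := by linarith
      positivity
    rw [Real.norm_eq_abs, abs_of_pos (inv_pos.2 hpos)]
    apply inv_anti₀ hK
    have h1 : 2 * a ≤ 2 * z := by linarith [hz.1]
    apply mul_le_mul h1 (mul_le_mul htz hstz hstb.le (by linarith)) (by positivity) (by positivity)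
  have := Convex.norm_image_sub_le_of_norm_hasDerivWithin_le key bound (convex_Icc a b) hx hy
  simpa [Real.norm_eq_abs] using this

lemma intervalIntegrable_of_bdd {g : ℝ → ℝ} {a b c : ℝ} (hab : a ≤ b) (hm : Measurable g)
    (h : ∀ y ∈ Ioc a b, |g y| ≤ c) : IntervalIntegrable g volume a b := by
  rw [intervalIntegrable_iff_integrableOn_Ioc_of_le hab]
  apply Integrable.mono' (integrableOn_const (C := c) measure_Ioc_lt_top.ne)
    hm.aestronglyMeasurable
  exact (ae_restrict_mem measurableSet_Ioc).mono fun y hy => by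
    simpa [Real.norm_eq_abs] using h y hy

lemma integral_nonneg_Ioc {g : ℝ → ℝ} {a b : ℝ} (hab : a ≤ b)
    (h : ∀ y ∈ Ioc a b, 0 ≤ g y) : 0 ≤ ∫ y in a..b, g y := by
  rw [integral_of_le hab]
  exact setIntegral_nonneg measurableSet_Ioc h

lemma integral_le_Ioc {g ψ : ℝ → ℝ} {a b : ℝ} (hab : a ≤ b)
    (hgi : IntervalIntegrable g volume a b) (hψi : IntervalIntegrable ψ volume a b)
    (h : ∀ y ∈ Ioc a b, g y ≤ ψ y) :
    ∫ y in a..b, g y ≤ ∫ y in a..b, ψ y := by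
  rw [integral_of_le hab, integral_of_le hab]
  exact setIntegral_mono_on ((intervalIntegrable_iff_integrableOn_Ioc_of_le hab).1 hgi)
    ((intervalIntegrable_iff_integrableOn_Ioc_of_le hab).1 hψi) measurableSet_Ioc h

lemma integral_le_const_Ioc {g : ℝ → ℝ} {a b c : ℝ} (hab : a ≤ b) (hm : Measurable g)
    (h : ∀ y ∈ Ioc a b, 0 ≤ g y ∧ g y ≤ c) :
    ∫ y in a..b, g y ≤ c * (b - a) := by
  rcases eq_or_lt_of_le hab with rfl | hlt
  · simp
  have hc : 0 ≤ c := by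
    obtain ⟨y, hy⟩ : (Ioc a b).Nonempty := nonempty_Ioc.2 hlt
    exact le_trans (h y hy).1 (h y hy).2
  have hgi : IntervalIntegrable g volume a b :=
    intervalIntegrable_of_bdd hab hm fun y hy => by
      rw [abs_le]; exact ⟨by linarith [(h y hy).1], (h y hy).2⟩
  calc ∫ y in a..b, g y ≤ ∫ _ in a..b, c :=
        integral_le_Ioc hab hgi (intervalIntegrable_const) fun y hy => (h y hy).2
    _ = c * (b - a) := by simp [mul_comm]

lemma integral_congr_Ioc {g h : ℝ → ℝ} {a b : ℝ} (hab : a ≤ b)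
    (heq : ∀ y ∈ Ioc a b, h y = g y) : ∫ y in a..b, h y = ∫ y in a..b, g y :=
  integral_congr_ae' (ae_of_all _ heq)
    (ae_of_all _ fun x hx => absurd hx (by rw [Ioc_eq_empty (not_lt.2 hab)]; exact notMem_empty x))

lemma intervalIntegrable_congr_Ioc {g h : ℝ → ℝ} {a b : ℝ} (hab : a ≤ b)
    (heq : ∀ y ∈ Ioc a b, h y = g y) (hgi : IntervalIntegrable g volume a b) :
    IntervalIntegrable h volume a b := by
  rw [intervalIntegrable_iff_integrableOn_Ioc_of_le hab] at *
  exact hgi.congr ((ae_restrict_mem measurableSet_Ioc).mono fun y hy => (heq y hy).symm)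

lemma intervalIntegrable_inv_sq {a b : ℝ} (ha : 0 < a) (hab : a ≤ b) :
    IntervalIntegrable (fun y : ℝ => (y^2)⁻¹) volume a b := by
  apply ContinuousOn.intervalIntegrable
  apply ContinuousOn.inv₀ (continuous_pow 2).continuousOn
  intro y hy
  rw [uIcc_of_le hab] at hy
  have hy0 : 0 < y := lt_of_lt_of_le ha hy.1
  positivity

lemma integral_inv_sq {a b : ℝ} (ha : 0 < a) (hab : a ≤ b) :
    ∫ y in a..b, (y^2)⁻¹ = a⁻¹ - b⁻¹ := by
  have h : ∀ y ∈ uIcc a b, HasDerivAt (fun z : ℝ => -z⁻¹) ((y^2)⁻¹) y := by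
    intro y hy
    rw [uIcc_of_le hab] at hy
    have hy0 : 0 < y := lt_of_lt_of_le ha hy.1
    simpa using (hasDerivAt_inv hy0.ne').fun_neg
  have hcont : IntervalIntegrable (fun y : ℝ => (y^2)⁻¹) volume a b :=
    intervalIntegrable_inv_sq ha hab
  rw [integral_eq_sub_of_hasDerivAt h hcont]
  ring

lemma measurable_g1 (ε : ℝ) : Measurable (fun y => (fL ε - fL y) / (ε - y)) :=
  (measurable_const.sub measurable_fL).div (measurable_const.sub measurable_id)

lemma est_T1a {ε : ℝ} (hε : 0 < ε) (hε1 : ε < 1) :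
    0 ≤ (∫ y in (0:ℝ)..(ε/2), (fL ε - fL y) / (ε - y)) ∧
      (∫ y in (0:ℝ)..(ε/2), (fL ε - fL y) / (ε - y)) ≤ fL ε := by
  have hlogε : Real.log ε < Real.log 2 := by
    calc Real.log ε < 0 := Real.log_neg hε hε1
    _ < Real.log 2 := Real.log_pos one_lt_two
  have hpt : ∀ y ∈ Ioc (0:ℝ) (ε/2), 0 ≤ (fL ε - fL y) / (ε - y) ∧
      (fL ε - fL y) / (ε - y) ≤ fL ε / (ε/2) := by
    intro y hy
    have h1 : fL y ≤ fL ε := fL_mono hy.1 (le_trans hy.2 (by linarith)) hlogε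
    have h2 : 0 < ε - y := by linarith [hy.2]
    refine ⟨div_nonneg (by linarith) h2.le, ?_⟩
    exact div_le_div₀ (fL_nonneg ε) (by linarith [fL_nonneg y]) (by linarith) (by linarith [hy.2])
  constructor
  · exact integral_nonneg_Ioc (by linarith) fun y hy => (hpt y hy).1
  · have := integral_le_const_Ioc (by linarith : (0:ℝ) ≤ ε/2) (measurable_g1 ε) hpt
    calc (∫ y in (0:ℝ)..(ε/2), (fL ε - fL y) / (ε - y)) ≤ fL ε / (ε/2) * (ε/2 - 0) := this
    _ = fL ε := by field_simp; ring

lemma est_T1b {ε : ℝ} (hε : 0 < ε) (hε1 : ε < 1) :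
    0 ≤ (∫ y in (ε/2)..ε, (fL ε - fL y) / (ε - y)) ∧
      (∫ y in (ε/2)..ε, (fL ε - fL y) / (ε - y)) ≤
        (2 * ((-Real.log ε) * Real.sqrt (-Real.log ε)))⁻¹ := by
  set S := -Real.log ε with hSdef
  have hS : 0 < S := by simp only [hSdef]; linarith [Real.log_neg hε hε1]
  have hsS : 0 < Real.sqrt S := Real.sqrt_pos.2 hS
  have hL : 0 < Real.log 2 := Real.log_pos one_lt_two
  have hlogε : Real.log ε < Real.log 2 := by simp only [hSdef] at hS; linarith
  set P := Real.log 2 - Real.log ε with hPdef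
  have hP : 0 < P := by simp only [hPdef]; linarith
  have hSP : S ≤ P := by simp only [hSdef, hPdef]; linarith
  have hsSP : Real.sqrt S ≤ Real.sqrt P := Real.sqrt_le_sqrt hSP
  set c2 := (ε * (S * Real.sqrt S))⁻¹ with hc2def
  have hKc2 : (2 * (ε/2) * (P * Real.sqrt P))⁻¹ ≤ c2 := by
    apply inv_anti₀ (by positivity)
    have h2 : S * Real.sqrt S ≤ P * Real.sqrt P :=
      mul_le_mul hSP hsSP hsS.le hP.le
    calc ε * (S * Real.sqrt S) ≤ ε * (P * Real.sqrt P) := by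
          exact mul_le_mul_of_nonneg_left h2 hε.le
    _ = 2 * (ε/2) * (P * Real.sqrt P) := by ring
  have hpt : ∀ y ∈ Ioc (ε/2) ε, 0 ≤ (fL ε - fL y) / (ε - y) ∧
      (fL ε - fL y) / (ε - y) ≤ c2 := by
    intro y hy
    have hy0 : 0 < y := by linarith [hy.1]
    have h1 : fL y ≤ fL ε := fL_mono hy0 hy.2 hlogε
    have h2 : 0 ≤ ε - y := by linarith [hy.2]
    have hlip := fL_lip (a := ε/2) (b := ε) (by linarith) hlogε
      (⟨hy.1.le, hy.2⟩ : y ∈ Icc (ε/2) ε) (⟨by linarith, le_refl ε⟩ : ε ∈ Icc (ε/2) ε)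
    rw [abs_of_nonneg (by linarith), abs_of_nonneg h2] at hlip
    rcases eq_or_lt_of_le h2 with heq | hlt
    · constructor
      · rw [← heq]; simp
      · rw [← heq]; simp [hc2def]; positivity
    · refine ⟨div_nonneg (by linarith) h2, ?_⟩
      rw [div_le_iff₀ hlt]
      calc fL ε - fL y ≤ (2 * (ε/2) * (P * Real.sqrt P))⁻¹ * (ε - y) := hlip
      _ ≤ c2 * (ε - y) := mul_le_mul_of_nonneg_right hKc2 h2
  constructor
  · exact integral_nonneg_Ioc (by linarith) fun y hy => (hpt y hy).1
  · have := integral_le_const_Ioc (by linarith : ε/2 ≤ ε) (measurable_g1 ε) hpt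
    calc (∫ y in (ε/2)..ε, (fL ε - fL y) / (ε - y)) ≤ c2 * (ε - ε/2) := this
    _ = (2 * (S * Real.sqrt S))⁻¹ := by
        rw [hc2def]; field_simp; ring

lemma est_T2 {ε : ℝ} (hε : 0 < ε) (hε4 : ε < 1/4) :
    |(∫ y in ε..(ε+1), (fL ε - fL y) / (y - ε)) -
      (fL ε * (Real.log (ε+1) - Real.log ε)
        + 2 * Real.sqrt (Real.log 2 - Real.log (ε+1))
        - 2 * Real.sqrt (Real.log 2 - Real.log ε))| ≤
      (2 * ((-Real.log ε) * Real.sqrt (-Real.log ε)))⁻¹ + fL (Real.sqrt ε)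
        + 2 * (Real.sqrt (Real.log (3/2)))⁻¹ * Real.sqrt ε := by
  have hε1 : ε < 1 := by linarith
  have hL : 0 < Real.log 2 := Real.log_pos one_lt_two
  have hlogε : Real.log ε < 0 := Real.log_neg hε hε1
  set S := -Real.log ε with hSdef
  have hS : 0 < S := by simp only [hSdef]; linarith
  have hsS : 0 < Real.sqrt S := Real.sqrt_pos.2 hS
  have hlog1ε : Real.log (ε+1) < Real.log 2 := Real.log_lt_log (by linarith) (by linarith)
  have hlog1εpos : 0 ≤ Real.log (ε+1) := Real.log_nonneg (by linarith)
  have hC0 : 0 < Real.log (3/2) := Real.log_pos (by norm_num)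
  set C0 := (Real.sqrt (Real.log (3/2)))⁻¹ with hC0def
  have hC0pos : 0 < C0 := by rw [hC0def]; positivity
  have hlog32 : Real.log (3/2) + Real.log (4/3) = Real.log 2 := by
    rw [← Real.log_mul (by norm_num) (by norm_num)]; norm_num
  have hlog43 : 0 ≤ Real.log (4/3) := Real.log_nonneg (by norm_num)
  -- fL y ≤ C0 for 0 < y ≤ 4/3
  have hfLC0 : ∀ y : ℝ, 0 < y → y ≤ 4/3 → fL y ≤ C0 := by
    intro y hy0 hy43
    apply fL_le_of hC0
    have := Real.log_le_log hy0 hy43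
    linarith
  have hs1 : Real.sqrt ε ≤ 1 := Real.sqrt_le_one.2 hε1.le
  have hεs : ε ≤ Real.sqrt ε := by
    nlinarith [Real.sq_sqrt hε.le, Real.sqrt_nonneg ε]
  have h2es : 2*ε ≤ Real.sqrt ε := by
    nlinarith [Real.sq_sqrt hε.le, Real.sqrt_nonneg ε]
  have hse1 : Real.sqrt ε ≤ ε + 1 := by linarith
  have hsε : 0 < Real.sqrt ε := Real.sqrt_pos.2 hε
  have hlogs : Real.log (Real.sqrt ε) < Real.log 2 := by
    calc Real.log (Real.sqrt ε) ≤ 0 := Real.log_nonpos hsε.le hs1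
    _ < Real.log 2 := hL
  -- the difference function d
  set d : ℝ → ℝ := fun y => (fL y - fL ε) * ε / ((y - ε) * y) with hddef
  have hmd : Measurable d := by
    apply Measurable.div
    · exact (measurable_fL.sub measurable_const).mul measurable_const
    · exact (measurable_id.sub measurable_const).mul measurable_id
  have hIM : IntervalIntegrable (fun y => (fL ε - fL y) / y) volume ε (ε+1) := by
    apply intervalIntegrable_of_bdd (by linarith)
      ((measurable_const.sub measurable_fL).div measurable_id)
      (c := (fL ε + C0) * ε⁻¹)
    intro y hy
    have hy0 : 0 < y := lt_trans hε hy.1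
    have hfy : fL y ≤ C0 := hfLC0 y hy0 (by linarith [hy.2])
    show |(fL ε - fL y) / id y| ≤ _
    rw [abs_div]
    simp only [id_eq]
    rw [abs_of_pos hy0]
    have hnum : |fL ε - fL y| ≤ fL ε + C0 := by
      rw [abs_le]
      constructor
      · linarith [fL_nonneg ε, fL_nonneg y]
      · linarith [fL_nonneg ε, fL_nonneg y]
    calc |fL ε - fL y| / y ≤ (fL ε + C0) / ε :=
          div_le_div₀ (add_nonneg (fL_nonneg ε) hC0pos.le) hnum hε hy.1.le
    _ = (fL ε + C0) * ε⁻¹ := by rw [div_eq_mul_inv]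
  -- closed form for M via FTC
  have hM : (∫ y in ε..(ε+1), (fL ε - fL y) / y) =
      fL ε * (Real.log (ε+1) - Real.log ε)
        + 2 * Real.sqrt (Real.log 2 - Real.log (ε+1))
        - 2 * Real.sqrt (Real.log 2 - Real.log ε) := by
    have hderiv : ∀ y ∈ uIcc ε (ε+1),
        HasDerivAt (fun z => fL ε * Real.log z + 2 * Real.sqrt (Real.log 2 - Real.log z))
          ((fL ε - fL y) / y) y := by
      intro y hy
      rw [uIcc_of_le (by linarith)] at hy
      have hy0 : 0 < y := lt_of_lt_of_le hε hy.1
      have hylog : Real.log y < Real.log 2 :=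
        lt_of_le_of_lt (Real.log_le_log hy0 hy.2) hlog1ε
      have ht : 0 < Real.log 2 - Real.log y := by linarith
      have hst : 0 < Real.sqrt (Real.log 2 - Real.log y) := Real.sqrt_pos.2 ht
      have h1 : HasDerivAt (fun z : ℝ => fL ε * Real.log z) (fL ε * y⁻¹) y :=
        (Real.hasDerivAt_log hy0.ne').const_mul (fL ε)
      have h0 : HasDerivAt (fun z : ℝ => Real.log 2 - Real.log z) (-y⁻¹) y := by
        simpa using (Real.hasDerivAt_log hy0.ne').const_sub (Real.log 2)
      have h2 : HasDerivAt (fun z : ℝ => Real.sqrt (Real.log 2 - Real.log z))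
          (1 / (2 * Real.sqrt (Real.log 2 - Real.log y)) * (-y⁻¹)) y :=
        (Real.hasDerivAt_sqrt ht.ne').comp y h0
      have h3 : HasDerivAt (fun z => fL ε * Real.log z + 2 * Real.sqrt (Real.log 2 - Real.log z)) _ y :=
        h1.add (h2.const_mul 2)
      convert h3 using 1
      have : fL y = (Real.sqrt (Real.log 2 - Real.log y))⁻¹ := rfl
      rw [this]
      field_simp
      ring
    rw [integral_eq_sub_of_hasDerivAt hderiv hIM]
    ring
  -- integrability of the main integrand g2
  have hg2m : Measurable (fun y => (fL ε - fL y) / (y - ε)) :=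
    (measurable_const.sub measurable_fL).div (measurable_id.sub measurable_const)
  set K2 := (2 * ε * ((Real.log 2 - Real.log (ε+1)) * Real.sqrt (Real.log 2 - Real.log (ε+1))))⁻¹
    with hK2def
  have hK2pos : 0 < K2 := by
    rw [hK2def]
    have : 0 < Real.log 2 - Real.log (ε+1) := by linarith
    positivity
  have hI2 : IntervalIntegrable (fun y => (fL ε - fL y) / (y - ε)) volume ε (ε+1) := by
    apply intervalIntegrable_of_bdd (by linarith) hg2m (c := K2)
    intro y hy
    have hyε : 0 < y - ε := by linarith [hy.1]
    have hlip := fL_lip (a := ε) (b := ε+1) hε hlog1ε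
      (⟨hy.1.le, hy.2⟩ : y ∈ Icc ε (ε+1)) (⟨le_refl ε, by linarith⟩ : ε ∈ Icc ε (ε+1))
    rw [abs_sub_comm (fL ε), abs_sub_comm ε, ← hK2def] at hlip
    rw [abs_div, abs_of_pos hyε, div_le_iff₀ hyε]
    calc |fL ε - fL y| = |fL y - fL ε| := abs_sub_comm _ _
    _ ≤ K2 * |y - ε| := hlip
    _ = K2 * (y - ε) := by rw [abs_of_pos hyε]
  -- difference identity
  have hsub : (∫ y in ε..(ε+1), (fL ε - fL y) / (y - ε))
      - (∫ y in ε..(ε+1), (fL ε - fL y) / y) = - ∫ y in ε..(ε+1), d y := by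
    rw [← integral_sub hI2 hIM, ← intervalIntegral.integral_neg]
    apply integral_congr_Ioc (by linarith)
    intro y hy
    have hy0 : 0 < y := lt_trans hε hy.1
    have hyε : 0 < y - ε := by linarith [hy.1]
    rw [hddef]
    field_simp
    ring
  -- piece A on [ε, 2ε]
  have hlog2ε : Real.log 2 - Real.log (2*ε) = S := by
    rw [Real.log_mul two_ne_zero hε.ne', hSdef]; ring
  have hlog2εlt : Real.log (2*ε) < Real.log 2 := by
    have : (0:ℝ) < S := hS
    linarith [hlog2ε]
  set KA := (2 * ε * (S * Real.sqrt S))⁻¹ with hKAdef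
  have hKApos : 0 < KA := by rw [hKAdef]; positivity
  have hptA : ∀ y ∈ Ioc ε (2*ε), 0 ≤ d y ∧ d y ≤ KA := by
    intro y hy
    have hy0 : 0 < y := lt_trans hε hy.1
    have hyε : 0 < y - ε := by linarith [hy.1]
    have hylog : Real.log y < Real.log 2 :=
      lt_of_le_of_lt (Real.log_le_log hy0 hy.2) hlog2εlt
    have hmono : fL ε ≤ fL y := fL_mono hε hy.1.le hylog
    have hlip := fL_lip (a := ε) (b := 2*ε) hε hlog2εlt
      (⟨le_refl ε, by linarith⟩ : ε ∈ Icc ε (2*ε)) (⟨hy.1.le, hy.2⟩ : y ∈ Icc ε (2*ε))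
    rw [hlog2ε] at hlip
    rw [abs_of_nonneg (by linarith), abs_of_pos hyε, ← hKAdef] at hlip
    constructor
    · rw [hddef]
      exact div_nonneg (mul_nonneg (by linarith) hε.le) (mul_nonneg hyε.le hy0.le)
    · calc d y = (fL y - fL ε) * ε / ((y - ε) * y) := by rw [hddef]
      _ ≤ KA * (y - ε) * ε / ((y - ε) * y) := by
          apply div_le_div_of_nonneg_right ?_ (by positivity)
          exact mul_le_mul_of_nonneg_right (by linarith) hε.le
      _ = KA * (ε / y) := by field_simp
      _ ≤ KA * 1 := mul_le_mul_of_nonneg_left (by rw [div_le_one hy0]; linarith [hy.1]) hKApos.le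
      _ = KA := mul_one KA
  have hIA : IntervalIntegrable d volume ε (2*ε) :=
    intervalIntegrable_of_bdd (by linarith) hmd fun y hy => by
      rw [abs_of_nonneg (hptA y hy).1]; exact (hptA y hy).2
  have hA : (0 ≤ ∫ y in ε..(2*ε), d y) ∧
      (∫ y in ε..(2*ε), d y) ≤ (2 * (S * Real.sqrt S))⁻¹ := by
    refine ⟨integral_nonneg_Ioc (by linarith) fun y hy => (hptA y hy).1, ?_⟩
    calc (∫ y in ε..(2*ε), d y) ≤ KA * (2*ε - ε) :=
          integral_le_const_Ioc (by linarith) hmd hptA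
    _ = (2 * (S * Real.sqrt S))⁻¹ := by rw [hKAdef]; field_simp; ring
  -- piece B on [2ε, √ε]
  have hptB : ∀ y ∈ Ioc (2*ε) (Real.sqrt ε), 0 ≤ d y ∧
      d y ≤ fL (Real.sqrt ε) * ((2*ε) / y^2) := by
    intro y hy
    have hy0 : 0 < y := by linarith [hy.1]
    have hyε : 0 < y - ε := by linarith [hy.1]
    have hys : y ≤ Real.sqrt ε := hy.2
    have hylog : Real.log y < Real.log 2 := lt_of_le_of_lt (Real.log_le_log hy0 hys) hlogs
    have hmono : fL ε ≤ fL y := fL_mono hε (by linarith [hy.1]) hylog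
    have hfy : fL y ≤ fL (Real.sqrt ε) := fL_mono hy0 hys hlogs
    constructor
    · rw [hddef]
      exact div_nonneg (mul_nonneg (by linarith) hε.le) (mul_nonneg hyε.le hy0.le)
    · calc d y = (fL y - fL ε) * (ε / ((y - ε) * y)) := by simp only [hddef]; rw [mul_div_assoc]
      _ ≤ fL (Real.sqrt ε) * ((2*ε) / y^2) := by
          apply mul_le_mul (by linarith [fL_nonneg ε]) ?_ (by positivity)
            (fL_nonneg (Real.sqrt ε))
          rw [div_le_div_iff₀ (by positivity) (by positivity)]
          nlinarith [mul_nonneg (mul_nonneg hε.le hy0.le) (show (0:ℝ) ≤ y - 2*ε by linarith [hy.1])]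
  have hIB : IntervalIntegrable d volume (2*ε) (Real.sqrt ε) :=
    intervalIntegrable_of_bdd h2es hmd fun y hy => by
      rw [abs_of_nonneg (hptB y hy).1]
      calc d y ≤ fL (Real.sqrt ε) * ((2*ε) / y^2) := (hptB y hy).2
      _ ≤ fL (Real.sqrt ε) * ((2*ε) / (2*ε)^2) := by
          apply mul_le_mul_of_nonneg_left ?_ (fL_nonneg _)
          apply div_le_div_of_nonneg_left (by positivity) (by positivity)
          nlinarith [hy.1]
  have hIψB : IntervalIntegrable (fun y => fL (Real.sqrt ε) * ((2*ε) / y^2)) volume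
      (2*ε) (Real.sqrt ε) := by
    apply intervalIntegrable_congr_Ioc h2es
      (g := fun y : ℝ => (fL (Real.sqrt ε) * (2*ε)) * (y^2)⁻¹)
      (fun y hy => by rw [div_eq_mul_inv]; ring)
    exact (intervalIntegrable_inv_sq (by positivity) h2es).const_mul _
  have hB : (0 ≤ ∫ y in (2*ε)..(Real.sqrt ε), d y) ∧
      (∫ y in (2*ε)..(Real.sqrt ε), d y) ≤ fL (Real.sqrt ε) := by
    refine ⟨integral_nonneg_Ioc h2es fun y hy => (hptB y hy).1, ?_⟩
    have h1 : (∫ y in (2*ε)..(Real.sqrt ε), d y) ≤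
        ∫ y in (2*ε)..(Real.sqrt ε), fL (Real.sqrt ε) * ((2*ε) / y^2) :=
      integral_le_Ioc h2es hIB hIψB fun y hy => (hptB y hy).2
    have h2 : (∫ y in (2*ε)..(Real.sqrt ε), fL (Real.sqrt ε) * ((2*ε) / y^2)) =
        fL (Real.sqrt ε) * (2*ε) * ((2*ε)⁻¹ - (Real.sqrt ε)⁻¹) := by
      have : ∀ y : ℝ, fL (Real.sqrt ε) * ((2*ε) / y^2) =
          (fL (Real.sqrt ε) * (2*ε)) * (y^2)⁻¹ := by intro y; rw [div_eq_mul_inv]; ring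
      simp_rw [this]
      rw [intervalIntegral.integral_const_mul, integral_inv_sq (by positivity) h2es]
    rw [h2] at h1
    calc (∫ y in (2*ε)..(Real.sqrt ε), d y) ≤
        fL (Real.sqrt ε) * (2*ε) * ((2*ε)⁻¹ - (Real.sqrt ε)⁻¹) := h1
    _ ≤ fL (Real.sqrt ε) * (2*ε) * (2*ε)⁻¹ :=
        mul_le_mul_of_nonneg_left (sub_le_self _ (inv_nonneg.2 hsε.le))
          (mul_nonneg (fL_nonneg _) (by positivity))
    _ = fL (Real.sqrt ε) := by field_simp
  -- piece C on [√ε, ε+1]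
  have hptC : ∀ y ∈ Ioc (Real.sqrt ε) (ε+1), 0 ≤ d y ∧ d y ≤ C0 * ((2*ε) / y^2) := by
    intro y hy
    have hy0 : 0 < y := lt_trans hsε hy.1
    have hy2e : 2*ε < y := lt_of_le_of_lt h2es hy.1
    have hyε : 0 < y - ε := by linarith [lt_of_le_of_lt hεs hy.1]
    have hylog : Real.log y < Real.log 2 :=
      lt_of_le_of_lt (Real.log_le_log hy0 hy.2) hlog1ε
    have hmono : fL ε ≤ fL y := fL_mono hε (by linarith) hylog
    have hfy : fL y ≤ C0 := hfLC0 y hy0 (by linarith [hy.2])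
    constructor
    · rw [hddef]
      exact div_nonneg (mul_nonneg (by linarith) hε.le) (mul_nonneg hyε.le hy0.le)
    · calc d y = (fL y - fL ε) * (ε / ((y - ε) * y)) := by
            simp only [hddef]; rw [mul_div_assoc]
      _ ≤ C0 * ((2*ε) / y^2) := by
          apply mul_le_mul (by linarith [fL_nonneg ε]) ?_ (by positivity) hC0pos.le
          rw [div_le_div_iff₀ (by positivity) (by positivity)]
          nlinarith [mul_nonneg (mul_nonneg hε.le hy0.le) (show (0:ℝ) ≤ y - 2*ε by linarith)]
  have hIC : IntervalIntegrable d volume (Real.sqrt ε) (ε+1) :=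
    intervalIntegrable_of_bdd (by linarith) hmd fun y hy => by
      rw [abs_of_nonneg (hptC y hy).1]
      calc d y ≤ C0 * ((2*ε) / y^2) := (hptC y hy).2
      _ ≤ C0 * ((2*ε) / (Real.sqrt ε)^2) := by
          apply mul_le_mul_of_nonneg_left ?_ hC0pos.le
          apply div_le_div_of_nonneg_left (by positivity) (by positivity)
          nlinarith [hy.1, hsε]
  have hIψC : IntervalIntegrable (fun y => C0 * ((2*ε) / y^2)) volume (Real.sqrt ε) (ε+1) := by
    apply intervalIntegrable_congr_Ioc (by linarith)
      (g := fun y : ℝ => (C0 * (2*ε)) * (y^2)⁻¹)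
      (fun y hy => by rw [div_eq_mul_inv]; ring)
    exact (intervalIntegrable_inv_sq hsε (by linarith)).const_mul _
  have hC : (0 ≤ ∫ y in (Real.sqrt ε)..(ε+1), d y) ∧
      (∫ y in (Real.sqrt ε)..(ε+1), d y) ≤ 2 * C0 * Real.sqrt ε := by
    refine ⟨integral_nonneg_Ioc (by linarith) fun y hy => (hptC y hy).1, ?_⟩
    have h1 : (∫ y in (Real.sqrt ε)..(ε+1), d y) ≤
        ∫ y in (Real.sqrt ε)..(ε+1), C0 * ((2*ε) / y^2) :=
      integral_le_Ioc (by linarith) hIC hIψC fun y hy => (hptC y hy).2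
    have h2 : (∫ y in (Real.sqrt ε)..(ε+1), C0 * ((2*ε) / y^2)) =
        C0 * (2*ε) * ((Real.sqrt ε)⁻¹ - (ε+1)⁻¹) := by
      have he : ∀ y : ℝ, C0 * ((2*ε) / y^2) = (C0 * (2*ε)) * (y^2)⁻¹ := by
        intro y; rw [div_eq_mul_inv]; ring
      simp_rw [he]
      rw [intervalIntegral.integral_const_mul, integral_inv_sq hsε (by linarith)]
    rw [h2] at h1
    calc (∫ y in (Real.sqrt ε)..(ε+1), d y) ≤
        C0 * (2*ε) * ((Real.sqrt ε)⁻¹ - (ε+1)⁻¹) := h1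
    _ ≤ C0 * (2*ε) * (Real.sqrt ε)⁻¹ :=
        mul_le_mul_of_nonneg_left (sub_le_self _ (by positivity))
          (by positivity)
    _ = 2 * C0 * Real.sqrt ε := by
        rw [mul_comm (C0 * (2*ε)) (Real.sqrt ε)⁻¹]
        rw [inv_mul_eq_div, div_eq_iff (by positivity : Real.sqrt ε ≠ 0)]
        nlinarith [Real.mul_self_sqrt hε.le]
  -- assemble
  have hsplit : (∫ y in ε..(ε+1), d y) = (∫ y in ε..(2*ε), d y)
      + (∫ y in (2*ε)..(Real.sqrt ε), d y) + (∫ y in (Real.sqrt ε)..(ε+1), d y) := by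
    rw [integral_add_adjacent_intervals hIA hIB,
      integral_add_adjacent_intervals (hIA.trans hIB) hIC]
  have hnn : 0 ≤ ∫ y in ε..(ε+1), d y := by
    rw [hsplit]
    have := hA.1; have := hB.1; have := hC.1
    linarith
  rw [← hM, hsub, abs_neg, abs_of_nonneg hnn, hsplit]
  linarith [hA.2, hB.2, hC.2]

lemma est_T0 {ε : ℝ} (hε : 0 < ε) (hε1 : ε < 1) :
    (∫ y in (ε-1)..0, fL ε * (ε - y)⁻¹) = fL ε * (-Real.log ε) := by
  rw [intervalIntegral.integral_const_mul]
  congr 1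
  have hderiv : ∀ y ∈ uIcc (ε-1) 0, HasDerivAt (fun z : ℝ => -Real.log (ε - z)) ((ε - y)⁻¹) y := by
    intro y hy
    rw [uIcc_of_le (by linarith)] at hy
    have hpos : 0 < ε - y := by linarith [hy.2]
    have h0 : HasDerivAt (fun z : ℝ => ε - z) (-1) y := (hasDerivAt_id y).const_sub ε
    have h1 := (Real.hasDerivAt_log hpos.ne').comp y h0
    have h2 : HasDerivAt (fun z : ℝ => -Real.log (ε - z)) (-((ε - y)⁻¹ * -1)) y := h1.neg
    convert h2 using 1
    ring
  have hint : IntervalIntegrable (fun y : ℝ => (ε - y)⁻¹) volume (ε-1) 0 := by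
    apply ContinuousOn.intervalIntegrable
    apply ContinuousOn.inv₀ (continuous_const.sub continuous_id).continuousOn
    intro y hy
    rw [uIcc_of_le (by linarith)] at hy
    have : 0 < ε - y := by linarith [hy.2]
    simp only [Pi.sub_apply, id_eq]
    linarith
  rw [integral_eq_sub_of_hasDerivAt hderiv hint]
  norm_num

lemma J_eq {ζ : ℝ} {φ u : ℝ → ℝ}
    (hφ1 : ∀ x ∈ Set.Ioo (-1 - ζ) (1 + ζ), φ x = 1)
    (hu : ∀ x, u x = if 0 < x then φ x / Real.sqrt (Real.log 2 - Real.log x) else 0)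
    {ε : ℝ} (hε : 0 < ε) (hεζ : ε < ζ) (hε4 : ε < 1/4) :
    (∫ y in (ε-1)..(ε+1), (u ε - u y) / |y - ε|) =
      fL ε * (-Real.log ε)
      + (∫ y in (0:ℝ)..(ε/2), (fL ε - fL y) / (ε - y))
      + (∫ y in (ε/2)..ε, (fL ε - fL y) / (ε - y))
      + (∫ y in ε..(ε+1), (fL ε - fL y) / (y - ε)) := by
  have hζ0 : 0 < ζ := hε.trans hεζ
  have hε1 : ε < 1 := by linarith
  have hL : 0 < Real.log 2 := Real.log_pos one_lt_two
  have hlogε : Real.log ε < Real.log 2 := by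
    calc Real.log ε < 0 := Real.log_neg hε hε1
    _ < Real.log 2 := hL
  have hlog1ε : Real.log (ε+1) < Real.log 2 := Real.log_lt_log (by linarith) (by linarith)
  have hC0 : 0 < Real.log (3/2) := Real.log_pos (by norm_num)
  have huε : u ε = fL ε := by
    rw [hu ε, if_pos hε, hφ1 ε ⟨by linarith, by linarith⟩, fL, one_div]
  have huy_pos : ∀ y : ℝ, 0 < y → y ≤ ε + 1 → u y = fL y := by
    intro y hy0 hy1
    rw [hu y, if_pos hy0, hφ1 y ⟨by linarith, by linarith⟩, fL, one_div]
  -- pointwise identities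
  have e0 : ∀ y ∈ Ioc (ε-1) (0:ℝ), (u ε - u y) / |y - ε| = fL ε * (ε - y)⁻¹ := by
    intro y hy
    rw [huε, hu y, if_neg (not_lt.2 hy.2), sub_zero, abs_of_neg (by linarith [hy.2] : y - ε < 0),
      neg_sub, div_eq_mul_inv]
  have e1 : ∀ y, 0 < y → y ≤ ε → (u ε - u y) / |y - ε| = (fL ε - fL y) / (ε - y) := by
    intro y hy0 hyε
    rw [huε, huy_pos y hy0 (by linarith), abs_of_nonpos (by linarith : y - ε ≤ 0), neg_sub]
  have e2 : ∀ y ∈ Ioc ε (ε+1), (u ε - u y) / |y - ε| = (fL ε - fL y) / (y - ε) := by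
    intro y hy
    rw [huε, huy_pos y (hε.trans hy.1) hy.2, abs_of_pos (by linarith [hy.1] : 0 < y - ε)]
  -- integrability of explicit pieces
  have i0 : IntervalIntegrable (fun y => fL ε * (ε - y)⁻¹) volume (ε-1) 0 := by
    apply ContinuousOn.intervalIntegrable
    apply ContinuousOn.mul continuousOn_const
    apply ContinuousOn.inv₀ (continuous_const.sub continuous_id).continuousOn
    intro y hy
    rw [uIcc_of_le (by linarith)] at hy
    have : 0 < ε - y := by linarith [hy.2]
    simp only [Pi.sub_apply, id_eq]; linarith
  have i1a : IntervalIntegrable (fun y => (fL ε - fL y) / (ε - y)) volume 0 (ε/2) := by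
    apply intervalIntegrable_of_bdd (by linarith) (measurable_g1 ε) (c := fL ε / (ε/2))
    intro y hy
    have h1 : fL y ≤ fL ε := fL_mono hy.1 (le_trans hy.2 (by linarith)) hlogε
    have h2 : 0 < ε - y := by linarith [hy.2]
    rw [abs_div, abs_of_pos h2, abs_of_nonneg (by linarith [fL_nonneg y] : (0:ℝ) ≤ fL ε - fL y)]
    exact div_le_div₀ (fL_nonneg ε) (by linarith [fL_nonneg y]) (by linarith) (by linarith [hy.2])
  have i1b : IntervalIntegrable (fun y => (fL ε - fL y) / (ε - y)) volume (ε/2) ε := by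
    set KB := (2 * (ε/2) * ((Real.log 2 - Real.log ε) * Real.sqrt (Real.log 2 - Real.log ε)))⁻¹
      with hKBdef
    apply intervalIntegrable_of_bdd (by linarith) (measurable_g1 ε) (c := KB)
    intro y hy
    have hy0 : 0 < y := by linarith [hy.1]
    have hlip := fL_lip (a := ε/2) (b := ε) (by linarith) hlogε
      (⟨hy.1.le, hy.2⟩ : y ∈ Icc (ε/2) ε) (⟨by linarith, le_refl ε⟩ : ε ∈ Icc (ε/2) ε)
    rw [← hKBdef] at hlip
    rcases eq_or_lt_of_le hy.2 with heq | hlt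
    · rw [heq]
      simp only [sub_self, div_zero, abs_zero]
      have hKB : 0 < KB := by
        rw [hKBdef]
        have : 0 < Real.log 2 - Real.log ε := by linarith
        positivity
      linarith
    · have h2 : 0 < ε - y := by linarith
      rw [abs_div, abs_of_pos h2, div_le_iff₀ h2]
      calc |fL ε - fL y| ≤ KB * |ε - y| := hlip
      _ = KB * (ε - y) := by rw [abs_of_pos h2]
  have i2 : IntervalIntegrable (fun y => (fL ε - fL y) / (y - ε)) volume ε (ε+1) := by
    set K2 := (2 * ε * ((Real.log 2 - Real.log (ε+1)) * Real.sqrt (Real.log 2 - Real.log (ε+1))))⁻¹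
      with hK2def
    apply intervalIntegrable_of_bdd (by linarith)
      ((measurable_const.sub measurable_fL).div (measurable_id.sub measurable_const)) (c := K2)
    intro y hy
    have hyε : 0 < y - ε := by linarith [hy.1]
    have hlip := fL_lip (a := ε) (b := ε+1) hε hlog1ε
      (⟨le_refl ε, by linarith⟩ : ε ∈ Icc ε (ε+1)) (⟨hy.1.le, hy.2⟩ : y ∈ Icc ε (ε+1))
    rw [← hK2def] at hlip
    have hgoal : |(fL ε - fL y) / (y - ε)| ≤ K2 := by
      rw [abs_div, abs_of_pos hyε, div_le_iff₀ hyε]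
      calc |fL ε - fL y| = |fL y - fL ε| := abs_sub_comm _ _
      _ ≤ K2 * |y - ε| := hlip
      _ = K2 * (y - ε) := by rw [abs_of_pos hyε]
    exact hgoal
  -- integrability of the original integrand on pieces
  set h : ℝ → ℝ := fun y => (u ε - u y) / |y - ε| with hhdef
  have ih0 : IntervalIntegrable h volume (ε-1) 0 :=
    intervalIntegrable_congr_Ioc (by linarith) e0 i0
  have ih1a : IntervalIntegrable h volume 0 (ε/2) :=
    intervalIntegrable_congr_Ioc (by linarith)
      (fun y hy => e1 y hy.1 (le_trans hy.2 (by linarith))) i1a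
  have ih1b : IntervalIntegrable h volume (ε/2) ε :=
    intervalIntegrable_congr_Ioc (by linarith)
      (fun y hy => e1 y (by linarith [hy.1]) hy.2) i1b
  have ih2 : IntervalIntegrable h volume ε (ε+1) :=
    intervalIntegrable_congr_Ioc (by linarith) e2 i2
  have hsplit : (∫ y in (ε-1)..(ε+1), h y) = (∫ y in (ε-1)..0, h y)
      + (∫ y in (0:ℝ)..(ε/2), h y) + (∫ y in (ε/2)..ε, h y) + (∫ y in ε..(ε+1), h y) := by
    rw [integral_add_adjacent_intervals ih0 ih1a,
      integral_add_adjacent_intervals (ih0.trans ih1a) ih1b,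
      integral_add_adjacent_intervals ((ih0.trans ih1a).trans ih1b) ih2]
  calc (∫ y in (ε-1)..(ε+1), (u ε - u y) / |y - ε|) = ∫ y in (ε-1)..(ε+1), h y := rfl
  _ = (∫ y in (ε-1)..0, h y) + (∫ y in (0:ℝ)..(ε/2), h y) + (∫ y in (ε/2)..ε, h y)
      + (∫ y in ε..(ε+1), h y) := hsplit
  _ = fL ε * (-Real.log ε) + (∫ y in (0:ℝ)..(ε/2), (fL ε - fL y) / (ε - y))
      + (∫ y in (ε/2)..ε, (fL ε - fL y) / (ε - y))
      + (∫ y in ε..(ε+1), (fL ε - fL y) / (y - ε)) := by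
    rw [integral_congr_Ioc (by linarith) e0, est_T0 hε hε1,
      integral_congr_Ioc (by linarith : (0:ℝ) ≤ ε/2)
        (fun y hy => e1 y hy.1 (le_trans hy.2 (by linarith))),
      integral_congr_Ioc (by linarith : ε/2 ≤ ε) (fun y hy => e1 y (by linarith [hy.1]) hy.2),
      integral_congr_Ioc (by linarith : ε ≤ ε+1) e2]

noncomputable def Cmain (ε : ℝ) : ℝ :=
  fL ε * (-Real.log ε) + fL ε * (Real.log (ε+1) - Real.log ε)
    + 2 * Real.sqrt (Real.log 2 - Real.log (ε+1)) - 2 * Real.sqrt (Real.log 2 - Real.log ε)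

noncomputable def Emain (ε : ℝ) : ℝ :=
  fL ε + 2 * (2 * ((-Real.log ε) * Real.sqrt (-Real.log ε)))⁻¹
    + fL (Real.sqrt ε) + 2 * (Real.sqrt (Real.log (3/2)))⁻¹ * Real.sqrt ε

lemma tendsto_sqrt_atTop' : Tendsto Real.sqrt atTop atTop := by
  rw [tendsto_atTop_atTop]
  intro b
  refine ⟨(max b 0)^2, fun a ha => ?_⟩
  have h1 : Real.sqrt ((max b 0)^2) ≤ Real.sqrt a := Real.sqrt_le_sqrt ha
  rw [Real.sqrt_sq (le_max_right b 0)] at h1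
  exact le_trans (le_max_left b 0) h1

lemma tendsto_neg_log : Tendsto (fun ε : ℝ => -Real.log ε) (nhdsWithin 0 (Set.Ioi 0)) atTop :=
  tendsto_neg_atBot_atTop.comp Real.tendsto_log_nhdsGT_zero

lemma tendsto_P : Tendsto (fun ε : ℝ => Real.log 2 - Real.log ε)
    (nhdsWithin 0 (Set.Ioi 0)) atTop := by
  have := tendsto_atTop_add_const_left _ (Real.log 2) tendsto_neg_log
  simpa [sub_eq_add_neg] using this

lemma tendsto_fL : Tendsto fL (nhdsWithin 0 (Set.Ioi 0)) (nhds 0) := by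
  have h1 : Tendsto (fun ε : ℝ => Real.sqrt (Real.log 2 - Real.log ε))
      (nhdsWithin 0 (Set.Ioi 0)) atTop := tendsto_sqrt_atTop'.comp tendsto_P
  exact tendsto_inv_atTop_zero.comp h1

lemma tendsto_log1 : Tendsto (fun ε : ℝ => Real.log (ε+1)) (nhdsWithin 0 (Set.Ioi 0))
    (nhds 0) := by
  have hplus : Tendsto (fun ε : ℝ => ε + 1) (nhdsWithin 0 (Set.Ioi 0)) (nhds 1) := by
    have := ((continuous_add_right (1:ℝ)).tendsto 0).mono_left
      (nhdsWithin_le_nhds (s := Set.Ioi (0:ℝ)))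
    simpa using this
  have := (Real.continuousAt_log one_ne_zero).tendsto.comp hplus
  simpa [Function.comp_def] using this

lemma tendsto_Cmain : Tendsto Cmain (nhdsWithin 0 (Set.Ioi 0))
    (nhds (2 * Real.sqrt (Real.log 2))) := by
  have hL : 0 < Real.log 2 := Real.log_pos one_lt_two
  have heq : Cmain =ᶠ[nhdsWithin 0 (Set.Ioi 0)] fun ε =>
      (Real.log (ε+1) - 2 * Real.log 2) / Real.sqrt (Real.log 2 - Real.log ε)
        + 2 * Real.sqrt (Real.log 2 - Real.log (ε+1)) := by
    filter_upwards [Ioo_mem_nhdsGT_of_mem (Set.mem_Ico.2 ⟨le_refl (0:ℝ), one_pos⟩)] with ε hε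
    have hε0 : 0 < ε := hε.1
    have hε1 : ε < 1 := hε.2
    have hP : 0 < Real.log 2 - Real.log ε := by
      have := Real.log_neg hε0 hε1; linarith
    have hsP : 0 < Real.sqrt (Real.log 2 - Real.log ε) := Real.sqrt_pos.2 hP
    have hsq : Real.sqrt (Real.log 2 - Real.log ε) * Real.sqrt (Real.log 2 - Real.log ε)
        = Real.log 2 - Real.log ε := Real.mul_self_sqrt hP.le
    show fL ε * (-Real.log ε) + fL ε * (Real.log (ε+1) - Real.log ε)
        + 2 * Real.sqrt (Real.log 2 - Real.log (ε+1)) - 2 * Real.sqrt (Real.log 2 - Real.log ε)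
        = _
    have hfL : fL ε = (Real.sqrt (Real.log 2 - Real.log ε))⁻¹ := rfl
    rw [hfL]
    field_simp
    linear_combination (-2) * hsq
  have h1 : Tendsto (fun ε : ℝ => (Real.log (ε+1) - 2 * Real.log 2)
      / Real.sqrt (Real.log 2 - Real.log ε)) (nhdsWithin 0 (Set.Ioi 0)) (nhds 0) := by
    apply Tendsto.div_atTop (tendsto_log1.sub_const (2 * Real.log 2))
    exact tendsto_sqrt_atTop'.comp tendsto_P
  have h2 : Tendsto (fun ε : ℝ => 2 * Real.sqrt (Real.log 2 - Real.log (ε+1)))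
      (nhdsWithin 0 (Set.Ioi 0)) (nhds (2 * Real.sqrt (Real.log 2))) := by
    apply Tendsto.const_mul
    have : Tendsto (fun ε : ℝ => Real.log 2 - Real.log (ε+1)) (nhdsWithin 0 (Set.Ioi 0))
        (nhds (Real.log 2)) := by
      have := tendsto_const_nhds (x := Real.log 2)
        (f := nhdsWithin (0:ℝ) (Set.Ioi 0)) |>.sub tendsto_log1
      simpa using this
    exact (Real.continuous_sqrt.continuousAt.tendsto.comp this)
  have := h1.add h2
  rw [zero_add] at this
  exact Tendsto.congr' heq.symm this

lemma tendsto_Emain : Tendsto Emain (nhdsWithin 0 (Set.Ioi 0)) (nhds 0) := by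
  have h2 : Tendsto (fun ε : ℝ => 2 * (2 * ((-Real.log ε) * Real.sqrt (-Real.log ε)))⁻¹)
      (nhdsWithin 0 (Set.Ioi 0)) (nhds 0) := by
    have hprod : Tendsto (fun ε : ℝ => 2 * ((-Real.log ε) * Real.sqrt (-Real.log ε)))
        (nhdsWithin 0 (Set.Ioi 0)) atTop := by
      apply Tendsto.const_mul_atTop two_pos
      exact Tendsto.atTop_mul_atTop₀ tendsto_neg_log
        (tendsto_sqrt_atTop'.comp tendsto_neg_log)
    have := (tendsto_inv_atTop_zero.comp hprod).const_mul (2:ℝ)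
    simpa only [mul_zero, Function.comp_def] using this
  have h3 : Tendsto (fun ε : ℝ => fL (Real.sqrt ε)) (nhdsWithin 0 (Set.Ioi 0)) (nhds 0) := by
    have hlogs : Tendsto (fun ε : ℝ => Real.log (Real.sqrt ε)) (nhdsWithin 0 (Set.Ioi 0))
        atBot := by
      apply Tendsto.congr' (f₁ := fun ε : ℝ => Real.log ε / 2)
      · filter_upwards [self_mem_nhdsWithin] with ε hε
        rw [Real.log_sqrt (le_of_lt hε)]
      · exact Real.tendsto_log_nhdsGT_zero.atBot_div_const two_pos
    have hP2 : Tendsto (fun ε : ℝ => Real.log 2 - Real.log (Real.sqrt ε))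
        (nhdsWithin 0 (Set.Ioi 0)) atTop := by
      have := tendsto_atTop_add_const_left _ (Real.log 2)
        (tendsto_neg_atBot_atTop.comp hlogs)
      simpa [sub_eq_add_neg] using this
    exact tendsto_inv_atTop_zero.comp (tendsto_sqrt_atTop'.comp hP2)
  have h4 : Tendsto (fun ε : ℝ => 2 * (Real.sqrt (Real.log (3/2)))⁻¹ * Real.sqrt ε)
      (nhdsWithin 0 (Set.Ioi 0)) (nhds 0) := by
    have hs : Tendsto (fun ε : ℝ => Real.sqrt ε) (nhdsWithin 0 (Set.Ioi 0)) (nhds 0) := by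
      have := (Real.continuous_sqrt.continuousAt (x := (0:ℝ))).tendsto.mono_left
        (nhdsWithin_le_nhds (s := Set.Ioi (0:ℝ)))
      simpa using this
    have := hs.const_mul (2 * (Real.sqrt (Real.log (3/2)))⁻¹)
    simpa only [mul_zero] using this
  have hfinal := ((tendsto_fL.add h2).add h3).add h4
  unfold Emain
  simpa only [add_zero] using hfinal

lemma key_est {ζ : ℝ} {φ u : ℝ → ℝ}
    (hφ1 : ∀ x ∈ Set.Ioo (-1 - ζ) (1 + ζ), φ x = 1)
    (hu : ∀ x, u x = if 0 < x then φ x / Real.sqrt (Real.log 2 - Real.log x) else 0)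
    {ε : ℝ} (hε : 0 < ε) (hεζ : ε < ζ) (hε4 : ε < 1/4) :
    |(∫ y in (ε-1)..(ε+1), (u ε - u y) / |y - ε|) - Cmain ε| ≤ Emain ε := by
  rw [J_eq hφ1 hu hε hεζ hε4]
  have hε1 : ε < 1 := by linarith
  obtain ⟨h1a, h1b⟩ := est_T1a hε hε1
  obtain ⟨h2a, h2b⟩ := est_T1b hε hε1
  have h3 := est_T2 hε hε4
  rw [abs_le] at h3 ⊢
  have he2 : 0 ≤ (2 * ((-Real.log ε) * Real.sqrt (-Real.log ε)))⁻¹ := by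
    have hS : (0:ℝ) ≤ -Real.log ε := by have := Real.log_neg hε hε1; linarith
    exact inv_nonneg.2 (mul_nonneg (by norm_num) (mul_nonneg hS (Real.sqrt_nonneg _)))
  have hfε := fL_nonneg ε
  have hfs := fL_nonneg (Real.sqrt ε)
  have hlast : 0 ≤ 2 * (Real.sqrt (Real.log (3/2)))⁻¹ * Real.sqrt ε := by positivity
  unfold Cmain Emain
  constructor
  · linarith [h3.1]
  · linarith [h3.2]

theorem stmt_10 (ζ : ℝ) (hζ0 : 0 < ζ)
    (hζ1 : ζ < Real.sqrt (Real.log 2) / 4 * Real.sqrt (Real.log (4 / 3)))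
    (φ : ℝ → ℝ) (hφs : ContDiff ℝ (⊤ : ℕ∞) φ) (hφc : HasCompactSupport φ)
    (hφe : ∀ x, φ (-x) = φ x)
    (hφ1 : ∀ x ∈ Set.Ioo (-1 - ζ) (1 + ζ), φ x = 1)
    (hφ0 : ∀ x, x ∉ Set.Ioo (-1 - 2 * ζ) (1 + 2 * ζ) → φ x = 0)
    (hφb : ∀ x, 0 ≤ φ x ∧ φ x ≤ 1)
    (u : ℝ → ℝ)
    (hu : ∀ x, u x = if 0 < x then φ x / Real.sqrt (Real.log 2 - Real.log x) else 0) :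
    Filter.Tendsto
      (fun ε : ℝ => ∫ y in (ε - 1)..(ε + 1), (u ε - u y) / |y - ε|)
      (nhdsWithin 0 (Set.Ioi 0)) (nhds (2 * Real.sqrt (Real.log 2))) := by
  have hδ : 0 < min ζ (1/4) := lt_min hζ0 (by norm_num)
  have hev : ∀ᶠ ε in nhdsWithin (0:ℝ) (Set.Ioi 0),
      ‖(∫ y in (ε - 1)..(ε + 1), (u ε - u y) / |y - ε|) - Cmain ε‖ ≤ Emain ε := by
    filter_upwards [Ioo_mem_nhdsGT_of_mem (Set.mem_Ico.2 ⟨le_refl (0:ℝ), hδ⟩)] with ε hε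
    rw [Real.norm_eq_abs]
    exact key_est hφ1 hu hε.1 (lt_of_lt_of_le hε.2 (min_le_left _ _))
      (lt_of_lt_of_le hε.2 (min_le_right _ _))
  have hzero : Tendsto (fun ε : ℝ =>
      (∫ y in (ε - 1)..(ε + 1), (u ε - u y) / |y - ε|) - Cmain ε)
      (nhdsWithin 0 (Set.Ioi 0)) (nhds 0) := squeeze_zero_norm' hev tendsto_Emain
  have hfin := tendsto_Cmain.add hzero
  rw [add_zero] at hfin
  exact hfin.congr fun ε => by ring
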